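/- Let X be a closed set of ordinals and let h : X → Ord be strictly order-preserving. The following are equivalent: (1) h is an embedding, i.e. for all α, β ∈ X and ξ < ρ, f_ξ(α) = β iff f_ξ(h(α)) = h(β); (2) for all ordinals σ and ξ, if σ is divisible by ρ, ξ < ρ and σ + ξ ∈ X, then h(σ + ξ) = h(σ) + ξ and h(σ) is divisible by ρ; (3) the range of h is closed and rem(h(α)) = rem(α) for all α ∈ X. -/

import Mathlib

open Ordinal Set

/-- `ρ` is additively indecomposable: nonzero and closed under addition. -/
def AddIndec (ρ : Ordinal) : Prop :=
  ρ ≠ 0 ∧ ∀ ξ < ρ, ∀ η < ρ, ξ + η < ρ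

/-- `σ` is divisible by `ρ`, i.e. of the form `ρ·ζ`. -/
def DivBy (ρ σ : Ordinal) : Prop := ∃ ζ : Ordinal, σ = ρ * ζ

/-- The function `f_ξ` of the structure `R^ρ`. -/
noncomputable def fApp (ρ ξ α : Ordinal) : Ordinal :=
  if α % ρ = 0 then α + ξ else ρ * (α / ρ)

/-- A set of ordinals is closed (with respect to `R^ρ`). -/
def RClosed (ρ : Ordinal) (X : Set Ordinal) : Prop :=
  ∀ σ ξ : Ordinal, DivBy ρ σ → ξ < ρ → σ + ξ ∈ X → σ ∈ X

/-- `h` is an embedding of `X` (as a substructure of `R^ρ`) into `R^ρ`. -/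
def IsEmbed (ρ : Ordinal) (X : Set Ordinal) (h : Ordinal → Ordinal) : Prop :=
  (∀ α ∈ X, ∀ β ∈ X, α < β → h α < h β) ∧
  (∀ α ∈ X, ∀ β ∈ X, ∀ ξ, ξ < ρ → (fApp ρ ξ α = β ↔ fApp ρ ξ (h α) = h β))

/-- `Y` is a covering of `Z` (relative to relations `le1`, `le2`). -/
def IsCovering (ρ : Ordinal) (le1 le2 : Ordinal → Ordinal → Prop)
    (Z Y : Set Ordinal) : Prop :=
  ∃ h : Ordinal → Ordinal, IsEmbed ρ Z h ∧
    (∀ σ ∈ Z, ∀ τ ∈ Z, (le1 σ τ → le1 (h σ) (h τ)) ∧ (le2 σ τ → le2 (h σ) (h τ))) ∧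
    h '' Z = Y

/-- The `i`-th element of a finite set of ordinals, in increasing order. -/
noncomputable def nth (Y : Finset Ordinal) (i : ℕ) : Ordinal :=
  (Y.sort (· ≤ ·)).getD i 0

/-- There are cofinally many finite sets `Ỹ` below `α` with property `P`. -/
def Cofinally (α : Ordinal) (P : Finset Ordinal → Prop) : Prop :=
  ∀ α' < α, ∃ Yt : Finset Ordinal, (∀ y ∈ Yt, α' < y ∧ y < α) ∧ P Yt

/-- The defining condition for `α ≤₁ β`. -/
def Le1Def (ρ : Ordinal) (le1 le2 : Ordinal → Ordinal → Prop) (α β : Ordinal) : Prop :=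
  α ≤ β ∧
  ∀ X Y : Finset Ordinal, (∀ x ∈ X, x < α) → (∀ y ∈ Y, α ≤ y ∧ y < β) →
    RClosed ρ (↑(X ∪ Y) : Set Ordinal) →
    ∃ Yt : Finset Ordinal, (∀ y ∈ Yt, y < α) ∧ (∀ x ∈ X, ∀ y ∈ Yt, x < y) ∧
      IsCovering ρ le1 le2 (↑(X ∪ Y) : Set Ordinal) (↑(X ∪ Yt) : Set Ordinal)

/-- The defining condition for `α ≤₂ β`. -/
def Le2Def (ρ : Ordinal) (le1 le2 : Ordinal → Ordinal → Prop) (α β : Ordinal) : Prop :=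
  α ≤ β ∧
  (∀ X Y : Finset Ordinal, (∀ x ∈ X, x < α) → (∀ y ∈ Y, y < α) →
    RClosed ρ (↑X : Set Ordinal) → RClosed ρ (↑Y : Set Ordinal) →
    (∀ x ∈ X, ∀ y ∈ Y, x < y) →
    Cofinally α (fun Yt => IsCovering ρ le1 le2 (↑(X ∪ Y) : Set Ordinal) (↑(X ∪ Yt) : Set Ordinal)) →
    Cofinally β (fun Yt => IsCovering ρ le1 le2 (↑(X ∪ Y) : Set Ordinal) (↑(X ∪ Yt) : Set Ordinal))) ∧
  (∀ X Y : Finset Ordinal, (∀ x ∈ X, x < α) → (∀ y ∈ Y, α ≤ y ∧ y < β) →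
    RClosed ρ (↑(X ∪ Y) : Set Ordinal) →
    ∃ Yt : Finset Ordinal, (∀ y ∈ Yt, y < α) ∧ (∀ x ∈ X, ∀ y ∈ Yt, x < y) ∧
      IsCovering ρ le1 le2 (↑(X ∪ Y) : Set Ordinal) (↑(X ∪ Yt) : Set Ordinal) ∧
      ∀ i : ℕ, i < Y.card → le1 (nth Y i) β → le1 (nth Yt i) α)

/-- `le1`, `le2` satisfy the recursive definitions of `≤₁` and `≤₂` of `R₂^ρ`. -/
def R2System (ρ : Ordinal) (le1 le2 : Ordinal → Ordinal → Prop) : Prop :=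
  (∀ α β, le1 α β ↔ Le1Def ρ le1 le2 α β) ∧
  (∀ α β, le2 α β ↔ Le2Def ρ le1 le2 α β)

/-- Isomorphism of two classes of ordinals as substructures of `R₂^ρ`. -/
def OrdIso (ρ : Ordinal) (le1 le2 : Ordinal → Ordinal → Prop) (A B : Set Ordinal) : Prop :=
  ∃ g : Ordinal → Ordinal, Set.BijOn g A B ∧
    (∀ σ ∈ A, ∀ τ ∈ A, (σ < τ ↔ g σ < g τ)) ∧
    (∀ σ ∈ A, ∀ τ ∈ A, ∀ ξ, ξ < ρ → (fApp ρ ξ σ = τ ↔ fApp ρ ξ (g σ) = g τ)) ∧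
    (∀ σ ∈ A, ∀ τ ∈ A, (le1 σ τ ↔ le1 (g σ) (g τ)) ∧ (le2 σ τ ↔ le2 (g σ) (g τ)))

/-- `κ` is `≤₁`-minimal. -/
def Min1 (le1 : Ordinal → Ordinal → Prop) (κ : Ordinal) : Prop :=
  ∀ ξ < κ, ¬ le1 ξ κ

/-- `(dom, f)` is the increasing enumeration of the class `S` of ordinals:
`dom` is a downward-closed class of indices and `f` restricted to `dom` is the
order isomorphism onto `S`. -/
def Enumerates (S : Set Ordinal) (dom : Ordinal → Prop) (f : Ordinal → Ordinal) : Prop :=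
  (∀ a b : Ordinal, dom a → b < a → dom b) ∧
  (∀ a b : Ordinal, dom b → a < b → f a < f b) ∧
  (∀ a : Ordinal, dom a → f a ∈ S) ∧
  (∀ x ∈ S, ∃ a, dom a ∧ f a = x)

/-- `l` is a limit point of the class `C` of ordinals. -/
def LimPt (C : Set Ordinal) (l : Ordinal) : Prop :=
  l ≠ 0 ∧ ∀ γ < l, ∃ δ ∈ C, γ < δ ∧ δ < l

/-- The class `C` of ordinals is topologically closed. -/
def TopClosed (C : Set Ordinal) : Prop := ∀ l, LimPt C l → l ∈ C

/-- The class `C` of ordinals is an interval. -/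
def IsInterval (C : Set Ordinal) : Prop :=
  ∀ σ τ υ : Ordinal, σ ∈ C → υ ∈ C → σ ≤ τ → τ ≤ υ → τ ∈ C

open Classical in
/-- The closure `J̄_ξ` of the `ξ`-th component of `I_α` with respect to `≤₂`,
given the enumeration `(dom₂, ν)` of the `≤₂`-minimal multiples of `κ_α` in `I_α`. -/
noncomputable def Jbar (le1 : Ordinal → Ordinal → Prop) (κα : Ordinal)
    (dom₂ : Ordinal → Prop) (ν : Ordinal → Ordinal) (ξ : Ordinal) : Set Ordinal :=
  if dom₂ (ξ + 1) then Set.Icc (ν ξ) (ν (ξ + 1))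
  else {δ | le1 κα δ} ∩ Set.Ici (ν ξ)

/-!
Write `α = ρ * (α / ρ) + α % ρ`. All three conditions say that on `X` the map `h` respects
this splitting: `h (ρ * (a / ρ)) = ρ * (h a / ρ)` and `h a % ρ = a % ρ`. The only real step
is to get the first identity from (3): closedness of the range gives `ρ * (h a / ρ) = h c`
with `c ∈ X` divisible by `ρ`, and monotonicity of `h` squeezes `h c` against
`h (ρ * (a / ρ))` from both sides.
-/

namespace Ordinal

variable {ρ α τ ξ c : Ordinal}

theorem add_mod_of_dvd_of_lt (hτ : ρ ∣ τ) (hξ : ξ < ρ) : (τ + ξ) % ρ = ξ := by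
  obtain ⟨ζ, rfl⟩ := hτ
  rw [mul_add_mod_self, mod_eq_of_lt hξ]

theorem mul_add_div_of_dvd_of_lt (hτ : ρ ∣ τ) (hξ : ξ < ρ) : ρ * ((τ + ξ) / ρ) = τ := by
  obtain ⟨ζ, rfl⟩ := hτ
  rw [mul_add_div _ hξ.ne_bot, div_eq_zero_of_lt hξ, add_zero]

theorem le_mul_div_of_dvd_of_le (hc : ρ ∣ c) (hcα : c ≤ α) : c ≤ ρ * (α / ρ) := by
  obtain rfl | hρ := eq_or_ne ρ 0
  · simp_all
  obtain ⟨ζ, rfl⟩ := hc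
  exact mul_le_mul_right ((mul_le_iff_le_div hρ).1 hcα) ρ

theorem fApp_of_dvd (hα : ρ ∣ α) : fApp ρ ξ α = α + ξ :=
  if_pos (mod_eq_zero_of_dvd hα)

theorem fApp_of_not_dvd (hα : ¬ρ ∣ α) : fApp ρ ξ α = ρ * (α / ρ) :=
  if_neg (mt dvd_of_mod_eq_zero hα)

theorem dvd_of_fApp_zero_eq_self (hα : fApp ρ 0 α = α) : ρ ∣ α := by
  by_contra hndvd
  rw [fApp_of_not_dvd hndvd] at hα
  exact hndvd (hα ▸ dvd_mul_right ρ _)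

end Ordinal

open Ordinal

variable {ρ : Ordinal} {X : Set Ordinal} {h : Ordinal → Ordinal}

theorem RClosed.mul_div_mem (hρ : ρ ≠ 0) (hX : RClosed ρ X) {a : Ordinal} (ha : a ∈ X) :
    ρ * (a / ρ) ∈ X :=
  hX _ (a % ρ) (dvd_mul_right ρ _) (mod_lt a hρ) (by rwa [div_add_mod])

def PreservesFApp (ρ : Ordinal) (X : Set Ordinal) (h : Ordinal → Ordinal) : Prop :=
  ∀ a ∈ X, ∀ b ∈ X, ∀ ξ, ξ < ρ → (fApp ρ ξ a = b ↔ fApp ρ ξ (h a) = h b)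

def ShiftsBlocks (ρ : Ordinal) (X : Set Ordinal) (h : Ordinal → Ordinal) : Prop :=
  ∀ σ ξ : Ordinal, DivBy ρ σ → ξ < ρ → σ + ξ ∈ X → h (σ + ξ) = h σ + ξ ∧ DivBy ρ (h σ)

def CommutesDivMod (ρ : Ordinal) (X : Set Ordinal) (h : Ordinal → Ordinal) : Prop :=
  ∀ a ∈ X, h (ρ * (a / ρ)) = ρ * (h a / ρ) ∧ h a % ρ = a % ρ

theorem CommutesDivMod.apply_eq (hcomm : CommutesDivMod ρ X h) {a : Ordinal} (ha : a ∈ X) :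
    h a = h (ρ * (a / ρ)) + a % ρ := by
  rw [(hcomm a ha).1, ← (hcomm a ha).2, div_add_mod]

theorem CommutesDivMod.dvd_apply (hcomm : CommutesDivMod ρ X h) {a : Ordinal} (ha : a ∈ X)
    (hdvd : ρ ∣ a) : ρ ∣ h a :=
  dvd_of_mod_eq_zero ((hcomm a ha).2.trans (mod_eq_zero_of_dvd hdvd))

theorem shiftsBlocks_of_preservesFApp (hX : RClosed ρ X) (hpres : PreservesFApp ρ X h) :
    ShiftsBlocks ρ X h := by
  intro σ ξ hσ hξ hmem
  have hσX : σ ∈ X := hX σ ξ hσ hξ hmem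
  have hhσ : ρ ∣ h σ :=
    dvd_of_fApp_zero_eq_self <| (hpres σ hσX σ hσX 0 (zero_le.trans_lt hξ)).1
      (by rw [fApp_of_dvd hσ, add_zero])
  have hshift := (hpres σ hσX (σ + ξ) hmem ξ hξ).1 (fApp_of_dvd hσ)
  rw [fApp_of_dvd hhσ] at hshift
  exact ⟨hshift.symm, hhσ⟩

theorem commutesDivMod_of_shiftsBlocks (hρ : ρ ≠ 0) (hshift : ShiftsBlocks ρ X h) :
    CommutesDivMod ρ X h := by
  intro a ha
  obtain ⟨happ, hdvd⟩ := hshift (ρ * (a / ρ)) (a % ρ) (dvd_mul_right ρ _) (mod_lt a hρ)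
    (by rwa [div_add_mod])
  rw [div_add_mod] at happ
  rw [happ, mul_add_div_of_dvd_of_lt hdvd (mod_lt a hρ), add_mod_of_dvd_of_lt hdvd (mod_lt a hρ)]
  exact ⟨rfl, rfl⟩

theorem CommutesDivMod.preservesFApp (hcomm : CommutesDivMod ρ X h) (hX : RClosed ρ X)
    (hmono : StrictMonoOn h X) : PreservesFApp ρ X h := by
  intro a ha b hb ξ hξ
  have hρ : ρ ≠ 0 := hξ.ne_bot
  by_cases hdvd : ρ ∣ a
  · have hhdvd := hcomm.dvd_apply ha hdvd
    rw [fApp_of_dvd hdvd, fApp_of_dvd hhdvd]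
    constructor
    · rintro rfl
      rw [hcomm.apply_eq hb, mul_add_div_of_dvd_of_lt hdvd hξ, add_mod_of_dvd_of_lt hdvd hξ]
    · intro hhb
      have hfloor : ρ * (b / ρ) = a := hmono.injOn (hX.mul_div_mem hρ hb) ha <| by
        rw [(hcomm b hb).1, ← hhb, mul_add_div_of_dvd_of_lt hhdvd hξ]
      rw [← div_add_mod b ρ, hfloor, ← (hcomm b hb).2, ← hhb, add_mod_of_dvd_of_lt hhdvd hξ]
  · have hhdvd : ¬ρ ∣ h a := fun hd =>
      hdvd (dvd_of_mod_eq_zero ((hcomm a ha).2.symm.trans (mod_eq_zero_of_dvd hd)))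
    rw [fApp_of_not_dvd hdvd, fApp_of_not_dvd hhdvd, ← (hcomm a ha).1]
    exact (hmono.injOn.eq_iff (hX.mul_div_mem hρ ha) hb).symm

theorem CommutesDivMod.rClosed_image (hcomm : CommutesDivMod ρ X h) (hX : RClosed ρ X) :
    RClosed ρ (h '' X) := by
  rintro τ ξ hτ hξ ⟨a, ha, hτξ⟩
  refine ⟨ρ * (a / ρ), hX.mul_div_mem hξ.ne_bot ha, ?_⟩
  rw [(hcomm a ha).1, hτξ, mul_add_div_of_dvd_of_lt hτ hξ]

theorem commutesDivMod_of_rClosed_image (hρ : ρ ≠ 0) (hX : RClosed ρ X)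
    (hmono : StrictMonoOn h X) (hcl : RClosed ρ (h '' X)) (hrem : ∀ a ∈ X, h a % ρ = a % ρ) :
    CommutesDivMod ρ X h := by
  intro a ha
  refine ⟨?_, hrem a ha⟩
  have hσ := hX.mul_div_mem hρ ha
  obtain ⟨c, hc, hcτ⟩ : ρ * (h a / ρ) ∈ h '' X :=
    hcl _ (h a % ρ) (dvd_mul_right ρ _) (mod_lt _ hρ) (by rw [div_add_mod]; exact ⟨a, ha, rfl⟩)
  have hcdvd : ρ ∣ c := dvd_of_mod_eq_zero <| by rw [← hrem c hc, hcτ, mul_mod]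
  have hσdvd : ρ ∣ h (ρ * (a / ρ)) := dvd_of_mod_eq_zero <| by rw [hrem _ hσ, mul_mod]
  have hle : h (ρ * (a / ρ)) ≤ ρ * (h a / ρ) :=
    le_mul_div_of_dvd_of_le hσdvd ((hmono.le_iff_le hσ ha).2 (mul_div_le a ρ))
  have hcle : c ≤ ρ * (a / ρ) :=
    le_mul_div_of_dvd_of_le hcdvd ((hmono.le_iff_le hc ha).1 (hcτ ▸ mul_div_le _ _))
  exact hle.antisymm (hcτ ▸ (hmono.le_iff_le hc hσ).2 hcle)

theorem embedding_characterization
    (ρ : Ordinal) (hρ : AddIndec ρ)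
    (X : Set Ordinal) (hX : RClosed ρ X)
    (h : Ordinal → Ordinal) (hmono : ∀ a ∈ X, ∀ b ∈ X, a < b → h a < h b) :
    ((∀ a ∈ X, ∀ b ∈ X, ∀ ξ, ξ < ρ → (fApp ρ ξ a = b ↔ fApp ρ ξ (h a) = h b)) ↔
      (∀ σ ξ : Ordinal, DivBy ρ σ → ξ < ρ → σ + ξ ∈ X →
        h (σ + ξ) = h σ + ξ ∧ DivBy ρ (h σ))) ∧
    ((∀ a ∈ X, ∀ b ∈ X, ∀ ξ, ξ < ρ → (fApp ρ ξ a = b ↔ fApp ρ ξ (h a) = h b)) ↔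
      (RClosed ρ (h '' X) ∧ ∀ a ∈ X, h a % ρ = a % ρ)) := by
  have hρ0 : ρ ≠ 0 := hρ.1
  refine ⟨⟨shiftsBlocks_of_preservesFApp hX, fun hshift => ?_⟩,
    ⟨fun hpres => ?_, fun ⟨hcl, hrem⟩ => ?_⟩⟩
  · exact (commutesDivMod_of_shiftsBlocks hρ0 hshift).preservesFApp hX hmono
  · have hcomm := commutesDivMod_of_shiftsBlocks hρ0 (shiftsBlocks_of_preservesFApp hX hpres)
    exact ⟨hcomm.rClosed_image hX, fun a ha => (hcomm a ha).2⟩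
  · exact (commutesDivMod_of_rClosed_image hρ0 hX hmono hcl hrem).preservesFApp hX hmono
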